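/- Let c1, c2 > 0 and write w(r) = log(1/r). Define f(r) = r·(1 − c1/w(r)) and u(r) = −c2·log(w(r)) for r ∈ (0, R), where 0 < R < min{1/e, e^{−c1}} (so that w(r) > max{1, c1} and f(r) > 0 on (0,R)). Then for every r ∈ (0, R) one has the identity 2·e^{2u(r)}·( −f''(r)/f(r) − u'(r)² ) = (2 / (r²·w(r)^{2+2c2}))·[ c1(c1+2)/(w(r) − c1) + c1 − c2² ]. Moreover, if in addition c1 ≥ c2², then this quantity is strictly positive for every r ∈ (0, R). -/

import Mathlib

/-!
With `w = log (1/r)` one has `w' = -1/r`, hence `f'' = -c1 (w + 2) / (r w³)`, `u' = c2 / (r w)` and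
`e^{2u} = w^{-2 c2}`. Substituting, `-f''/f - u'² = (c1 (w + 2) / (w - c1) - c2²) / (r² w²)`, and
`c1 (w + 2) / (w - c1) = c1 + c1 (c1 + 2) / (w - c1)`. Since `r < e^{-c1}` means `w > c1`, every
term of the bracket is positive once `c1 ≥ c2²`.
-/

open Real Filter Topology

noncomputable section

namespace Drawstring

/-- The scalar curvature of `e^{-2u} (dr² + f² dθ²) + e^{2u} dt²` at radius `r`. -/
def scalarCurvature (f u : ℝ → ℝ) (r : ℝ) : ℝ :=
  2 * exp (2 * u r) * (-(deriv (deriv f) r) / f r - deriv u r ^ 2)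

variable {c1 c2 r : ℝ}

theorem ne_zero_of_log_one_div_ne_zero (hw : log (1 / r) ≠ 0) : r ≠ 0 := by
  rintro rfl
  simp at hw

theorem lt_log_one_div_of_lt_exp_neg {a : ℝ} (hr : 0 < r) (h : r < exp (-a)) :
    a < log (1 / r) := by
  rw [lt_log_iff_exp_lt (by positivity), lt_one_div (exp_pos a) hr, one_div, ← exp_neg]
  exact h

theorem hasDerivAt_log_one_div (hr : r ≠ 0) :
    HasDerivAt (fun x => log (1 / x)) (-(1 / r)) r := by
  simp only [one_div, log_inv]
  exact (hasDerivAt_log hr).neg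

theorem hasDerivAt_profile (hw : log (1 / r) ≠ 0) :
    HasDerivAt (fun x => x * (1 - c1 / log (1 / x)))
      (1 - c1 / log (1 / r) - c1 / log (1 / r) ^ 2) r := by
  have hr := ne_zero_of_log_one_div_ne_zero hw
  have h : HasDerivAt (fun x => x * (1 - c1 / log (1 / x))) _ r := (hasDerivAt_id' r).mul
    ((hasDerivAt_const r 1).sub ((hasDerivAt_const r c1).fun_div (hasDerivAt_log_one_div hr) hw))
  convert h using 1
  field_simp
  ring

theorem deriv_deriv_profile (hw : log (1 / r) ≠ 0) :
    deriv (deriv fun x => x * (1 - c1 / log (1 / x))) r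
      = -(c1 * (log (1 / r) + 2) / (r * log (1 / r) ^ 3)) := by
  have hL := hasDerivAt_log_one_div (ne_zero_of_log_one_div_ne_zero hw)
  have h_deriv : deriv (fun x => x * (1 - c1 / log (1 / x))) =ᶠ[𝓝 r]
      fun x => 1 - c1 / log (1 / x) - c1 / log (1 / x) ^ 2 := by
    filter_upwards [hL.continuousAt.eventually_ne hw] with x hx
    exact (hasDerivAt_profile hx).deriv
  have h : HasDerivAt (fun x => 1 - c1 / log (1 / x) - c1 / log (1 / x) ^ 2) _ r :=
    ((hasDerivAt_const r 1).sub ((hasDerivAt_const r c1).fun_div hL hw)).sub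
      ((hasDerivAt_const r c1).fun_div (hL.pow 2) (pow_ne_zero 2 hw))
  rw [h_deriv.deriv_eq, h.deriv]
  field_simp
  ring

theorem hasDerivAt_potential (hw : log (1 / r) ≠ 0) :
    HasDerivAt (fun x => -c2 * log (log (1 / x))) (c2 / (r * log (1 / r))) r := by
  have hr := ne_zero_of_log_one_div_ne_zero hw
  have h : HasDerivAt (fun x => -c2 * log (log (1 / x))) _ r :=
    ((hasDerivAt_log hw).comp r (hasDerivAt_log_one_div hr)).const_mul (-c2)
  convert h using 1
  field_simp

theorem scalarCurvature_eq (hw : 0 < log (1 / r)) (hwc : log (1 / r) ≠ c1) :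
    scalarCurvature (fun x => x * (1 - c1 / log (1 / x))) (fun x => -c2 * log (log (1 / x))) r
      = 2 / (r ^ 2 * log (1 / r) ^ (2 + 2 * c2)) *
          (c1 * (c1 + 2) / (log (1 / r) - c1) + c1 - c2 ^ 2) := by
  have hr := ne_zero_of_log_one_div_ne_zero hw.ne'
  rw [scalarCurvature, deriv_deriv_profile hw.ne', (hasDerivAt_potential hw.ne').deriv]
  set w := log (1 / r)
  have hexp : exp (2 * (-c2 * log w)) = (w ^ (2 * c2))⁻¹ := by
    rw [rpow_def_of_pos hw, ← exp_neg]
    ring_nf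
  have hpow : w ^ (2 + 2 * c2) = w ^ 2 * w ^ (2 * c2) := by
    rw [rpow_add hw, rpow_two]
  have hwc' : w - c1 ≠ 0 := sub_ne_zero.mpr hwc
  rw [hexp, hpow]
  field_simp
  ring

theorem scalarCurvature_pos (hc1 : 0 < c1) (hwc : c1 < log (1 / r)) (hc : c2 ^ 2 ≤ c1) :
    0 < scalarCurvature (fun x => x * (1 - c1 / log (1 / x)))
      (fun x => -c2 * log (log (1 / x))) r := by
  have hw := hc1.trans hwc
  have hr := ne_zero_of_log_one_div_ne_zero hw.ne'
  rw [scalarCurvature_eq hw hwc.ne']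
  have h_frac : 0 < c1 * (c1 + 2) / (log (1 / r) - c1) :=
    div_pos (by positivity) (sub_pos.mpr hwc)
  have h_bracket : 0 < c1 * (c1 + 2) / (log (1 / r) - c1) + c1 - c2 ^ 2 := by linarith
  positivity

end Drawstring

open Drawstring

theorem stmt_0 (c1 c2 R : ℝ) (hc1 : 0 < c1)
    (hR : R < min (Real.exp (-1)) (Real.exp (-c1)))
    (w f u : ℝ → ℝ)
    (hw : ∀ r, w r = Real.log (1 / r))
    (hf : ∀ r, f r = r * (1 - c1 / w r))
    (hu : ∀ r, u r = -c2 * Real.log (w r)) :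
    (∀ r ∈ Set.Ioo (0 : ℝ) R,
      2 * Real.exp (2 * u r) * (-(deriv (deriv f) r) / f r - (deriv u r) ^ 2)
        = (2 / (r ^ 2 * w r ^ (2 + 2 * c2))) *
            (c1 * (c1 + 2) / (w r - c1) + c1 - c2 ^ 2)) ∧
    (c1 ≥ c2 ^ 2 → ∀ r ∈ Set.Ioo (0 : ℝ) R,
      0 < 2 * Real.exp (2 * u r) * (-(deriv (deriv f) r) / f r - (deriv u r) ^ 2)) := by
  obtain rfl : w = fun r => log (1 / r) := funext hw
  obtain rfl : f = fun r => r * (1 - c1 / log (1 / r)) := funext hf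
  obtain rfl : u = fun r => -c2 * log (log (1 / r)) := funext hu
  have hwc : ∀ r ∈ Set.Ioo (0 : ℝ) R, c1 < log (1 / r) := fun r hr =>
    lt_log_one_div_of_lt_exp_neg hr.1 (hr.2.trans (hR.trans_le (min_le_right _ _)))
  exact ⟨fun r hr => scalarCurvature_eq (hc1.trans (hwc r hr)) (hwc r hr).ne',
    fun hc r hr => scalarCurvature_pos hc1 (hwc r hr) hc⟩
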